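/- arXiv:1704.04249 — 4 statements merged into one kernel-verified Lean document; each statement's English description precedes it below -/
import Mathlib

section
/- Let D be a strongly connected directed graph that contains no directed cycle of odd length. Then the underlying undirected graph of D is bipartite. -/
/-- A directed odd cycle in the digraph given by arc relation `A`:
an injective map from `ZMod n` (with `n` odd) whose consecutive images are arcs. -/
def HasDirOddCycle {V : Type*} (A : V → V → Prop) : Prop :=
  ∃ (n : ℕ) (c : ZMod n → V), Odd n ∧ Function.Injective c ∧ ∀ i, A (c i) (c (i + 1))

/-- A directed walk of length `n` from `u` to `v`. -/
private def DWalk {V : Type*} (A : V → V → Prop) (u v : V) (n : ℕ) : Prop :=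
  ∃ f : ℕ → V, f 0 = u ∧ f n = v ∧ ∀ i < n, A (f i) (f (i + 1))

private lemma DWalk.snoc {V : Type*} {A : V → V → Prop} {u v w : V} {n : ℕ}
    (h : DWalk A u v n) (hA : A v w) : DWalk A u w (n + 1) := by
  obtain ⟨f, h0, hn, hf⟩ := h
  refine ⟨fun k => if k ≤ n then f k else w, by simp [h0], by simp, ?_⟩
  intro i hi
  rcases Nat.lt_or_ge i n with h1 | h1
  · have e1 : i ≤ n := by omega
    have e2 : i + 1 ≤ n := by omega
    simp only [if_pos e1, if_pos e2]
    exact hf i h1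
  · have hin : i = n := by omega
    subst hin
    simp only [le_refl, if_pos, if_neg (by omega : ¬ i + 1 ≤ i)]
    rw [hn]; exact hA

private lemma DWalk.concat {V : Type*} {A : V → V → Prop} {u v w : V} {m n : ℕ}
    (h1 : DWalk A u v m) (h2 : DWalk A v w n) : DWalk A u w (m + n) := by
  obtain ⟨f, hf0, hfm, hf⟩ := h1
  obtain ⟨g, hg0, hgn, hg⟩ := h2
  refine ⟨fun k => if k ≤ m then f k else g (k - m), by simp [hf0], ?_, ?_⟩
  · rcases Nat.eq_zero_or_pos n with h | h
    · subst h
      simp only [Nat.add_zero, le_refl, if_pos]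
      rw [hfm, ← hg0, hgn]
    · have hnle : ¬ (m + n ≤ m) := by omega
      simp only [if_neg hnle]
      have e : m + n - m = n := by omega
      rw [e, hgn]
  · intro i hi
    rcases Nat.lt_or_ge i m with h1 | h1
    · have e1 : i ≤ m := by omega
      have e2 : i + 1 ≤ m := by omega
      simp only [if_pos e1, if_pos e2]
      exact hf i h1
    · rcases Nat.eq_or_lt_of_le h1 with h1 | h1
      · obtain rfl : i = m := h1.symm
        have hnpos : 0 < n := by omega
        simp only [le_refl, if_pos, if_neg (by omega : ¬ i + 1 ≤ i)]
        have e : i + 1 - i = 1 := by omega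
        rw [e, hfm, ← hg0]
        have := hg 0 hnpos
        simpa using this
      · have e1 : ¬ (i ≤ m) := by omega
        have e2 : ¬ (i + 1 ≤ m) := by omega
        simp only [if_neg e1, if_neg e2]
        have e : i + 1 - m = (i - m) + 1 := by omega
        rw [e]
        exact hg (i - m) (by omega)

/-- An odd closed directed walk yields a directed odd cycle. -/
private lemma extract_odd_cycle {V : Type*} {A : V → V → Prop} :
    ∀ n : ℕ, Odd n → ∀ u : V, DWalk A u u n → HasDirOddCycle A := by
  intro n
  induction n using Nat.strong_induction_on with
  | _ n ih =>
  intro hodd u hw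
  obtain ⟨f, hf0, hfn, hfA⟩ := hw
  have hpos : 0 < n := hodd.pos
  by_cases hinj : ∀ i < n, ∀ j < n, f i = f j → i = j
  · rcases Nat.lt_or_ge n 2 with h2 | h2
    · have h1 : n = 1 := by omega
      subst h1
      refine ⟨1, fun _ => u, odd_one, fun a b _ => Subsingleton.elim a b, ?_⟩
      intro _
      have := hfA 0 one_pos
      rw [hf0] at this
      simpa [hfn] using this
    · haveI : NeZero n := ⟨by omega⟩
      refine ⟨n, fun i => f i.val, hodd, ?_, ?_⟩
      · intro a b hab
        have := hinj a.val (ZMod.val_lt a) b.val (ZMod.val_lt b) hab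
        exact ZMod.val_injective n this
      · intro i
        have hval : (i + 1).val = (i.val + 1) % n := by
          haveI : Fact (1 < n) := ⟨by omega⟩
          rw [ZMod.val_add, ZMod.val_one]
        rcases Nat.lt_or_ge (i.val + 1) n with h | h
        · show A (f i.val) (f (i + 1).val)
          rw [hval, Nat.mod_eq_of_lt h]
          exact hfA i.val (ZMod.val_lt i)
        · have hin : i.val + 1 = n := by have := ZMod.val_lt i; omega
          show A (f i.val) (f (i + 1).val)
          rw [hval, hin, Nat.mod_self, hf0]
          have := hfA i.val (ZMod.val_lt i)
          rwa [hin, hfn] at this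
  · push_neg at hinj
    obtain ⟨i, hi, j, hj, hfij, hne⟩ := hinj
    obtain ⟨i, j, hi, hj, hij, hfij⟩ : ∃ i j, i < n ∧ j < n ∧ i < j ∧ f i = f j := by
      rcases Nat.lt_or_ge i j with h | h
      · exact ⟨i, j, hi, hj, h, hfij⟩
      · exact ⟨j, i, hj, hi, by omega, hfij.symm⟩
    set d := j - i with hd
    have hd1 : 1 ≤ d := by omega
    have hdn : d < n := by omega
    have hpar : Odd d ∨ Odd (n - d) := by
      rw [Nat.odd_iff] at hodd ⊢
      rw [Nat.odd_iff]
      omega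
    rcases hpar with h | h
    · refine ih d hdn h (f i) ⟨fun k => f (i + k), by simp, ?_, ?_⟩
      · show f (i + d) = f i
        have e : i + d = j := by omega
        rw [e]
        exact hfij.symm
      · intro k hk
        show A (f (i + k)) (f (i + (k + 1)))
        have e : i + (k + 1) = (i + k) + 1 := by omega
        rw [e]
        exact hfA (i + k) (by omega)
    · refine ih (n - d) (by omega) h u
        ⟨fun k => if k ≤ i then f k else f (k + d), by simpa using hf0, ?_, ?_⟩
      · show (if n - d ≤ i then f (n - d) else f (n - d + d)) = u
        have h1 : ¬ (n - d ≤ i) := by omega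
        rw [if_neg h1]
        have e : n - d + d = n := by omega
        rw [e, hfn]
      · intro k hk
        show A (if k ≤ i then f k else f (k + d)) (if k + 1 ≤ i then f (k + 1) else f (k + 1 + d))
        rcases Nat.lt_or_ge k i with hki | hki
        · simp only [if_pos (by omega : k ≤ i), if_pos (by omega : k + 1 ≤ i)]
          exact hfA k (by omega)
        · rcases Nat.eq_or_lt_of_le hki with hki | hki
          · obtain rfl : k = i := hki.symm
            simp only [le_refl, if_pos, if_neg (by omega : ¬ k + 1 ≤ k)]
            rw [hfij]
            have e : k + 1 + d = j + 1 := by omega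
            rw [e]
            exact hfA j hj
          · simp only [if_neg (by omega : ¬ k ≤ i), if_neg (by omega : ¬ k + 1 ≤ i)]
            have e : k + 1 + d = (k + d) + 1 := by omega
            rw [e]
            exact hfA (k + d) (by omega)

/-- A strongly connected digraph with no directed odd cycle has bipartite
underlying undirected graph. -/
theorem stmt_0 {V : Type*} (A : V → V → Prop)
    (hsc : ∀ u v : V, Relation.ReflTransGen A u v)
    (hno : ¬ HasDirOddCycle A) :
    (SimpleGraph.fromRel A).Colorable 2 := by
  classical
  cases isEmpty_or_nonempty V with
  | inl h =>
    exact ⟨⟨fun v => (h.elim v), fun {a} _ _ => (h.elim a)⟩⟩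
  | inr h =>
    obtain ⟨u0⟩ := h
    -- existence of walks
    have hwalk : ∀ u v : V, ∃ n, DWalk A u v n := by
      intro u v
      induction hsc u v with
      | refl => exact ⟨0, fun _ => u, rfl, rfl, by omega⟩
      | tail _ hA ih =>
        obtain ⟨n, hw⟩ := ih
        exact ⟨n + 1, hw.snoc hA⟩
    -- no odd closed walks
    have hnoodd : ∀ (u : V) (n : ℕ), DWalk A u u n → n % 2 = 0 := by
      intro u n hw
      rcases Nat.even_or_odd n with he | ho
      · exact Nat.even_iff.mp he
      · exact absurd (extract_odd_cycle n ho u hw) hno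
    -- parity of walk length is well-defined
    have hparity : ∀ (v : V) (n1 n2 : ℕ), DWalk A u0 v n1 → DWalk A u0 v n2 →
        n1 % 2 = n2 % 2 := by
      intro v n1 n2 h1 h2
      obtain ⟨m, h3⟩ := hwalk v u0
      have e1 := hnoodd u0 (n1 + m) (h1.concat h3)
      have e2 := hnoodd u0 (n2 + m) (h2.concat h3)
      omega
    choose nv hv using hwalk u0
    refine ⟨SimpleGraph.Coloring.mk (fun v => (⟨nv v % 2, by omega⟩ : Fin 2)) ?_⟩
    intro a b hab
    rw [SimpleGraph.fromRel_adj] at hab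
    obtain ⟨hne, hor⟩ := hab
    intro heq
    have heq' : nv a % 2 = nv b % 2 := by
      simpa [Fin.ext_iff] using heq
    rcases hor with hA | hA
    · have := hparity b (nv a + 1) (nv b) ((hv a).snoc hA) (hv b)
      omega
    · have := hparity a (nv b + 1) (nv a) ((hv b).snoc hA) (hv a)
      omega
end

section
/- Let (D, σ) be a labeled digraph with σ : A(D) → S_ℓ and let H be a strongly connected subgraph of D. If H is a v-colorful walk for some vertex v ∈ V(H), then H is a u-colorful walk for every vertex u ∈ V(H). -/
/-- Directed walks in a permutation-labeled digraph, recording the composed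
permutation (applied left-to-right along the walk). -/
inductive WalkP {V : Type*} {l : ℕ} (A : V → V → Equiv.Perm (Fin l) → Prop) :
    V → V → Equiv.Perm (Fin l) → Prop
  | nil (v : V) : WalkP A v v 1
  | cons {u v w : V} {π ρ : Equiv.Perm (Fin l)} :
      A u v π → WalkP A v w ρ → WalkP A u w (ρ * π)

lemma WalkP.append {V : Type*} {l : ℕ} {A : V → V → Equiv.Perm (Fin l) → Prop}
    {u v w : V} {π ρ : Equiv.Perm (Fin l)}
    (h1 : WalkP A u v π) (h2 : WalkP A v w ρ) : WalkP A u w (ρ * π) := by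
  induction h1 with
  | nil => simpa using h2
  | cons h hw ih =>
      rw [← mul_assoc]
      exact WalkP.cons h (ih h2)

lemma exists_walk {V : Type*} {l : ℕ} {B : V → V → Equiv.Perm (Fin l) → Prop}
    {u v : V} (h : Relation.ReflTransGen (fun a b => ∃ π, B a b π) u v) :
    ∃ π, WalkP B u v π := by
  induction h with
  | refl => exact ⟨1, WalkP.nil u⟩
  | tail _ hbc ih =>
      obtain ⟨α, hα⟩ := ih
      obtain ⟨π, hπ⟩ := hbc
      exact ⟨(1 * π) * α, hα.append (WalkP.cons hπ (WalkP.nil _))⟩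

/-- If a strongly connected subgraph `H` (arcs `B`, vertices `S`) of a labeled
digraph `D` (arcs `A`) is a `v`-colorful walk for some `v ∈ S`, then it is a
`u`-colorful walk for every `u ∈ S`. -/
theorem stmt_7 {V : Type*} {l : ℕ} (A B : V → V → Equiv.Perm (Fin l) → Prop) (S : Set V)
    (hsub : ∀ u v π, B u v π → A u v π)
    (hvert : ∀ u v π, B u v π → u ∈ S ∧ v ∈ S)
    (hsc : ∀ u ∈ S, ∀ v ∈ S, Relation.ReflTransGen (fun a b => ∃ π, B a b π) u v)
    (v : V) (hv : v ∈ S)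
    (hcol : ∀ i : Fin l, ∃ π, WalkP B v v π ∧ π i ≠ i) :
    ∀ u ∈ S, ∀ i : Fin l, ∃ π, WalkP B u u π ∧ π i ≠ i := by
  intro u hu i
  obtain ⟨α, hα⟩ := exists_walk (hsc u hu v hv)
  obtain ⟨β, hβ⟩ := exists_walk (hsc v hv u hu)
  obtain ⟨π, hπ, hπi⟩ := hcol (α i)
  by_cases h : β (α i) = i
  · refine ⟨β * π * α, hα.append (hπ.append hβ), ?_⟩
    intro hc
    apply hπi
    apply β.injective
    show β (π (α i)) = β (α i)
    rw [h]; exact hc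
  · exact ⟨β * α, hα.append hβ, h⟩
end

section
/- Let (D, σ) be a strongly connected labeled digraph and let (D', σ') = Doubling(D) be obtained by adding, for each arc a = (u,v), a reverse arc (v,u) labeled σ(a)^{-1} (removing duplicates). Then D contains a colorful walk if and only if D' contains a colorful walk. -/
/-- The labeled digraph with arcs `A` contains a colorful walk. -/
def HasColorfulWalk {V : Type*} {l : ℕ} (A : V → V → Equiv.Perm (Fin l) → Prop) : Prop :=
  ∃ (S : Set V) (B : V → V → Equiv.Perm (Fin l) → Prop) (v : V),
    (∀ u w π, B u w π → A u w π) ∧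
    (∀ u w π, B u w π → u ∈ S ∧ w ∈ S) ∧
    (∀ u ∈ S, ∀ w ∈ S, Relation.ReflTransGen (fun a b => ∃ π, B a b π) u w) ∧
    v ∈ S ∧
    (∀ i : Fin l, ∃ π, WalkP B v v π ∧ π i ≠ i)

namespace Stmt11Aux

variable {V : Type*} {l : ℕ} {A C : V → V → Equiv.Perm (Fin l) → Prop}

lemma walkP_mono (h : ∀ u w π, A u w π → C u w π) :
    ∀ {u w π}, WalkP A u w π → WalkP C u w π := by
  intro u w π hw
  induction hw with
  | nil v => exact WalkP.nil v
  | cons ha _ ih => exact WalkP.cons (h _ _ _ ha) ih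

lemma walkP_trans : ∀ {u v w π ρ}, WalkP A u v π → WalkP A v w ρ →
    WalkP A u w (ρ * π) := by
  intro u v w π ρ h1 h2
  induction h1 with
  | nil v => simpa using h2
  | cons ha _ ih =>
    have := WalkP.cons ha (ih h2)
    simpa [mul_assoc] using this

lemma walkP_arc {u w π} (h : A u w π) : WalkP A u w π := by
  simpa using WalkP.cons h (WalkP.nil w)

lemma closed_mul {v π ρ} (h1 : WalkP A v v π) (h2 : WalkP A v v ρ) :
    WalkP A v v (π * ρ) := walkP_trans h2 h1

lemma closed_pow {v π} (h : WalkP A v v π) : ∀ n, WalkP A v v (π ^ n) := by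
  intro n
  induction n with
  | zero => simpa using WalkP.nil v
  | succ n ih => rw [pow_succ]; exact closed_mul ih h

lemma closed_inv {v} {π : Equiv.Perm (Fin l)} (h : WalkP A v v π) :
    WalkP A v v π⁻¹ := by
  have hpos : 0 < orderOf π := orderOf_pos π
  have h1 : π * π ^ (orderOf π - 1) = 1 := by
    rw [← pow_succ', Nat.sub_add_cancel hpos, pow_orderOf_eq_one]
  have : π⁻¹ = π ^ (orderOf π - 1) := inv_eq_of_mul_eq_one_right h1
  rw [this]
  exact closed_pow h _

lemma reach_walk (h : Relation.ReflTransGen (fun a b => ∃ π, A a b π) u w) :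
    ∃ α, WalkP A u w α := by
  induction h with
  | refl => exact ⟨1, WalkP.nil u⟩
  | tail _ hbc ih =>
    obtain ⟨α, hα⟩ := ih
    obtain ⟨π, hπ⟩ := hbc
    exact ⟨π * α, walkP_trans hα (walkP_arc hπ)⟩

lemma main (hsc : ∀ u v : V, Relation.ReflTransGen (fun a b => ∃ π, A a b π) u v)
    (v : V) :
    ∀ {u w π}, WalkP (fun a b π => A a b π ∨ A b a π⁻¹) u w π →
      ∀ {α β}, WalkP A v u α → WalkP A w v β → WalkP A v v (β * π * α) := by
  intro u w π hw
  induction hw with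
  | nil x =>
    intro α β hα hβ
    simpa using walkP_trans hα hβ
  | @cons u x w π ρ ha hw ih =>
    intro α β hα hβ
    obtain ⟨γ, hγ⟩ := reach_walk (hsc v x)
    obtain ⟨δ, hδ⟩ := reach_walk (hsc x v)
    obtain ⟨ε, hε⟩ := reach_walk (hsc u v)
    have X : WalkP A v v (β * ρ * γ) := ih hγ hβ
    rcases ha with h | h
    · have Z : WalkP A v v (δ * (π * α)) :=
        walkP_trans (walkP_trans hα (walkP_arc h)) hδ
      have W : WalkP A v v (δ * γ) := walkP_trans hγ hδ
      have heq : β * (ρ * π) * α = (β * ρ * γ) * (δ * γ)⁻¹ * (δ * (π * α)) := by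
        group
      rw [heq]
      exact closed_mul (closed_mul X (closed_inv W)) Z
    · have Z : WalkP A v v (ε * (π⁻¹ * γ)) :=
        walkP_trans (walkP_trans hγ (walkP_arc h)) hε
      have W : WalkP A v v (ε * α) := walkP_trans hα hε
      have heq : β * (ρ * π) * α = (β * ρ * γ) * (ε * (π⁻¹ * γ))⁻¹ * (ε * α) := by
        group
      rw [heq]
      exact closed_mul (closed_mul X (closed_inv Z)) W

end Stmt11Aux

/-- A strongly connected labeled digraph has a colorful walk iff its doubling
(adding, for each arc, the reverse arc labeled with the inverse permutation)
has a colorful walk. -/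
theorem stmt_11 {V : Type*} {l : ℕ} (A : V → V → Equiv.Perm (Fin l) → Prop)
    (hsc : ∀ u v : V, Relation.ReflTransGen (fun a b => ∃ π, A a b π) u v) :
    HasColorfulWalk A ↔ HasColorfulWalk (fun u v π => A u v π ∨ A v u π⁻¹) := by
  constructor
  · rintro ⟨S, B, v, hBA, hBS, hconn, hvS, hcol⟩
    exact ⟨S, B, v, fun u w π h => Or.inl (hBA u w π h), hBS, hconn, hvS, hcol⟩
  · rintro ⟨S, B, v, hBA, hBS, hconn, hvS, hcol⟩
    refine ⟨Set.univ, A, v, fun _ _ _ h => h, fun _ _ _ _ => ⟨trivial, trivial⟩,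
      fun u _ w _ => hsc u w, trivial, ?_⟩
    intro i
    obtain ⟨π, hw, hi⟩ := hcol i
    have hw' : WalkP (fun u v π => A u v π ∨ A v u π⁻¹) v v π :=
      Stmt11Aux.walkP_mono hBA hw
    have := Stmt11Aux.main hsc v hw' (WalkP.nil v) (WalkP.nil v)
    refine ⟨π, by simpa using this, hi⟩
end

section
/- Let D be a digraph and let D' be obtained from D by subdividing every arc once: each arc (u,v) is replaced by a new vertex x and the arcs (u,x), (x,v). Then a vertex set S ⊆ V(D) is a feedback vertex set of D (i.e., D − S is acyclic) if and only if S is a directed odd cycle transversal of D'. In particular, D contains a directed cycle if and only if D' contains a directed odd cycle. -/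
/-- The digraph obtained from the digraph with arc relation `A` by adding, for
every arc `(u,v)`, a new vertex (encoded `Sum.inr (u,v)`) and arcs
`(u, x)`, `(x, v)`, while keeping the original arcs. -/
def SubdivKeep {V : Type*} (A : V → V → Prop) : (V ⊕ V × V) → (V ⊕ V × V) → Prop
  | Sum.inl u, Sum.inl v => A u v
  | Sum.inl u, Sum.inr p => p.1 = u ∧ A p.1 p.2
  | Sum.inr p, Sum.inl v => p.2 = v ∧ A p.1 p.2
  | Sum.inr _, Sum.inr _ => False

/-!
A directed cycle of length `n` in `D - S` gives two closed walks in `D'` avoiding `S`: the cycle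
itself, of length `n`, and the cycle with one arc subdivided, of length `n + 1`. One of them is
odd, and an odd closed walk contains an odd directed cycle: a repeated vertex splits it into two
shorter closed walks whose lengths add up to an odd number.

Conversely, sending a subdivision vertex `(u, v)` to `v` maps every arc of `D'` out of an original
vertex to an arc of `D`, and every other arc to a loop, so a cycle of `D'` avoiding `S` projects to
a closed walk of positive length in `D - S`, which contains a directed cycle.
-/

open Relation

section Walks

variable {α : Type*} {R : α → α → Prop}

def HasWalk (R : α → α → Prop) (k : ℕ) (x y : α) : Prop :=
  ∃ w : ℕ → α, w 0 = x ∧ w k = y ∧ ∀ i < k, R (w i) (w (i + 1))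

def IsDirCycle {n : ℕ} (R : α → α → Prop) (c : ZMod n → α) : Prop :=
  Function.Injective c ∧ ∀ i, R (c i) (c (i + 1))

def avoiding (R : α → α → Prop) (T : Set α) (x y : α) : Prop :=
  R x y ∧ x ∉ T

lemma avoiding_empty (R : α → α → Prop) : avoiding R ∅ = R := by
  ext x y
  simp [avoiding]

lemma HasWalk.single {x y : α} (h : R x y) : HasWalk R 1 x y :=
  ⟨fun i => if i = 0 then x else y, rfl, rfl, fun i hi => by simpa [Nat.lt_one_iff.mp hi]⟩

lemma HasWalk.append {a b : ℕ} {x y z : α} (hxy : HasWalk R a x y) (hyz : HasWalk R b y z) :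
    HasWalk R (a + b) x z := by
  obtain ⟨w, hw0, hwa, hw⟩ := hxy
  obtain ⟨v, hv0, hvb, hv⟩ := hyz
  refine ⟨fun i => if i ≤ a then w i else v (i - a), by simp [hw0], ?_, fun i hi => ?_⟩
  · rcases Nat.eq_zero_or_pos b with rfl | hb
    · simp [hwa, ← hv0, hvb]
    · simp [show ¬ a + b ≤ a by omega, hvb]
  rcases lt_or_ge i a with hia | hia
  · simpa [hia.le, Nat.succ_le_of_lt hia] using hw i hia
  · have hv' := hv (i - a) (by omega)
    rw [show i - a + 1 = i + 1 - a by omega] at hv'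
    rcases hia.eq_or_lt with rfl | hia
    · simpa [hwa, ← hv0] using hv'
    · simpa [hia.not_ge, show ¬ i + 1 ≤ a by omega] using hv'

lemma hasWalk_of_segment {w : ℕ → α} {k a b : ℕ} (hw : ∀ i < k, R (w i) (w (i + 1)))
    (hab : a ≤ b) (hbk : b ≤ k) : HasWalk R (b - a) (w a) (w b) :=
  ⟨fun i => w (a + i), rfl, by simp only [Nat.add_sub_cancel' hab],
    fun i hi => hw (a + i) (by omega)⟩

lemma transGen_iff_exists_hasWalk {x y : α} :
    TransGen R x y ↔ ∃ k, 0 < k ∧ HasWalk R k x y := by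
  constructor
  · intro h
    induction h with
    | single h => exact ⟨1, one_pos, .single h⟩
    | tail _ hbc ih =>
      obtain ⟨k, _, hk⟩ := ih
      exact ⟨k + 1, k.succ_pos, hk.append (.single hbc)⟩
  · rintro ⟨k, hk, w, rfl, rfl, hw⟩
    induction k with
    | zero => exact absurd hk (lt_irrefl 0)
    | succ k ih =>
      rcases Nat.eq_zero_or_pos k with rfl | hk
      · exact .single (hw 0 one_pos)
      · exact (ih hk fun i hi => hw i (by omega)).tail (hw k k.lt_succ_self)

lemma hasWalk_zmod {n : ℕ} {c : ZMod n → α} (hc : ∀ i, R (c i) (c (i + 1))) (m : ℕ) :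
    HasWalk R m (c 0) (c m) :=
  ⟨fun i => c i, by simp, rfl, fun i _ => by simpa using hc i⟩

lemma isDirCycle_of_injOn {w : ℕ → α} {k : ℕ} [NeZero k] (hwk : w k = w 0)
    (hw : ∀ i < k, R (w i) (w (i + 1))) (hinj : Set.InjOn w (Set.Iio k)) :
    IsDirCycle R (fun i : ZMod k => w i.val) := by
  refine ⟨fun i j hij => ZMod.val_injective k (hinj (ZMod.val_lt i) (ZMod.val_lt j) hij),
    fun i => ?_⟩
  have hsucc : (i + 1).val = (i.val + 1) % k := by
    rw [← ZMod.val_natCast, Nat.cast_succ, ZMod.natCast_zmod_val]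
  have hi := hw i.val (ZMod.val_lt i)
  show R (w i.val) (w (i + 1).val)
  rcases Nat.lt_or_eq_of_le (Nat.succ_le_of_lt (ZMod.val_lt i)) with hlt | (heq : i.val + 1 = k)
  · rwa [hsucc, Nat.mod_eq_of_lt hlt]
  · rw [hsucc, heq, Nat.mod_self, ← hwk]
    rwa [heq] at hi

theorem exists_isDirCycle_of_hasWalk {k : ℕ} {x : α} (hk : 0 < k) (h : HasWalk R k x x) :
    ∃ (m : ℕ) (c : ZMod m → α), 0 < m ∧ (Odd k → Odd m) ∧ IsDirCycle R c := by
  induction k using Nat.strong_induction_on generalizing x with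
  | _ k ih =>
  obtain ⟨w, hw0, hwk, hw⟩ := h
  by_cases hinj : Set.InjOn w (Set.Iio k)
  · have : NeZero k := ⟨hk.ne'⟩
    exact ⟨k, _, hk, id, isDirCycle_of_injOn (hwk.trans hw0.symm) hw hinj⟩
  obtain ⟨i, j, hij, hjk, hwij⟩ : ∃ i j, i < j ∧ j < k ∧ w i = w j := by
    simp only [Set.InjOn, Set.mem_Iio, not_forall] at hinj
    obtain ⟨a, ha, b, hb, hab, hne⟩ := hinj
    rcases lt_or_gt_of_ne hne with h | h
    · exact ⟨a, b, h, hb, hab⟩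
    · exact ⟨b, a, h, ha, hab.symm⟩
  have inner : HasWalk R (j - i) (w i) (w i) := by
    simpa [hwij] using hasWalk_of_segment hw hij.le hjk.le
  have outer : HasWalk R (i + (k - j)) x x := by
    have h₁ := hasWalk_of_segment hw (Nat.zero_le i) (hij.trans hjk).le
    have h₂ := hasWalk_of_segment hw hjk.le le_rfl
    rw [hw0, hwij, Nat.sub_zero] at h₁
    rw [hwk] at h₂
    exact h₁.append h₂
  have hsplit : k = (j - i) + (i + (k - j)) := by omega
  rcases Nat.even_or_odd (j - i) with heven | hodd
  · obtain ⟨m, c, hm, hodd', hc⟩ := ih _ (by omega) (by omega) outer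
    refine ⟨m, c, hm, fun hk => hodd' ?_, hc⟩
    rw [hsplit, Nat.odd_add'] at hk
    exact hk.mpr heven
  · obtain ⟨m, c, hm, hodd', hc⟩ := ih _ (by omega) (by omega) inner
    exact ⟨m, c, hm, fun _ => hodd' hodd, hc⟩

theorem exists_isDirCycle_iff_exists_transGen :
    (∃ (n : ℕ) (c : ZMod n → α), 0 < n ∧ IsDirCycle R c) ↔ ∃ x, TransGen R x x := by
  constructor
  · rintro ⟨n, c, hn, -, hc⟩
    refine ⟨c 0, transGen_iff_exists_hasWalk.mpr ⟨n, hn, ?_⟩⟩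
    simpa using hasWalk_zmod hc n
  · rintro ⟨x, hx⟩
    obtain ⟨k, hk, hwalk⟩ := transGen_iff_exists_hasWalk.mp hx
    obtain ⟨m, c, hm, -, hc⟩ := exists_isDirCycle_of_hasWalk hk hwalk
    exact ⟨m, c, hm, hc⟩

end Walks

section Subdivision

variable {V : Type*} (A : V → V → Prop) (T : Set V)

lemma reflTransGen_of_avoiding_subdivKeep :
    ∀ p q, avoiding (SubdivKeep A) (Sum.inl '' T) p q →
      ReflTransGen (avoiding A T) (Sum.elim id Prod.snd p) (Sum.elim id Prod.snd q)
  | .inl u, .inl _, ⟨h, hu⟩ => .single ⟨h, fun hT => hu ⟨u, hT, rfl⟩⟩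
  | .inl u, .inr (_, _), ⟨⟨rfl, h⟩, hu⟩ => .single ⟨h, fun hT => hu ⟨_, hT, rfl⟩⟩
  | .inr _, .inl _, ⟨⟨rfl, _⟩, _⟩ => .refl
  | .inr _, .inr _, ⟨h, _⟩ => h.elim

lemma avoiding_of_avoiding_subdivKeep_inl {u : V} :
    ∀ q, avoiding (SubdivKeep A) (Sum.inl '' T) (.inl u) q →
      avoiding A T u (Sum.elim id Prod.snd q)
  | .inl _, ⟨h, hu⟩ => ⟨h, fun hT => hu ⟨u, hT, rfl⟩⟩
  | .inr (_, _), ⟨⟨rfl, h⟩, hu⟩ => ⟨h, fun hT => hu ⟨_, hT, rfl⟩⟩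

lemma exists_transGen_of_transGen_subdivKeep {p : V ⊕ V × V}
    (h : TransGen (avoiding (SubdivKeep A) (Sum.inl '' T)) p p) :
    ∃ u, TransGen (avoiding A T) u u := by
  have key : ∀ u, TransGen (avoiding (SubdivKeep A) (Sum.inl '' T)) (.inl u) (.inl u) →
      TransGen (avoiding A T) u u := by
    intro u h
    obtain ⟨q, hq, hqu⟩ := TransGen.head'_iff.mp h
    exact .head' (avoiding_of_avoiding_subdivKeep_inl A T q hq)
      (ReflTransGen.lift' _ (reflTransGen_of_avoiding_subdivKeep A T) _ _ hqu)
  rcases p with u | e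
  · exact ⟨u, key u h⟩
  · obtain ⟨q, hq, hqe⟩ := TransGen.head'_iff.mp h
    rcases q with v | _
    · exact ⟨v, key v (.tail' hqe hq)⟩
    · exact hq.1.elim

lemma exists_odd_hasWalk_subdivKeep {n : ℕ} {c : ZMod n → V} (hn : 0 < n)
    (hc : ∀ i, avoiding A T (c i) (c (i + 1))) :
    ∃ k, Odd k ∧
      HasWalk (avoiding (SubdivKeep A) (Sum.inl '' T)) k (.inl (c 0)) (.inl (c 0)) := by
  have hd : ∀ i, avoiding (SubdivKeep A) (Sum.inl '' T) (.inl (c i)) (.inl (c (i + 1))) :=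
    fun i => ⟨(hc i).1, by simpa using (hc i).2⟩
  rcases Nat.even_or_odd n with heven | hodd
  · have hlast : ((n - 1 : ℕ) : ZMod n) + 1 = 0 := by simp [Nat.cast_pred hn]
    have hu := hc ((n - 1 : ℕ) : ZMod n)
    rw [hlast] at hu
    refine ⟨n - 1 + 1 + 1, by simpa [Nat.sub_add_cancel hn] using heven.add_one, ?_⟩
    let e : V × V := (c ((n - 1 : ℕ) : ZMod n), c 0)
    have hin : avoiding (SubdivKeep A) (Sum.inl '' T) (.inl e.1) (.inr e) :=
      ⟨⟨rfl, hu.1⟩, by simpa using hu.2⟩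
    have hout : avoiding (SubdivKeep A) (Sum.inl '' T) (.inr e) (.inl e.2) :=
      ⟨⟨rfl, hu.1⟩, by simp⟩
    exact ((hasWalk_zmod (c := Sum.inl ∘ c) hd (n - 1)).append (.single hin)).append
      (.single hout)
  · exact ⟨n, hodd, by simpa using hasWalk_zmod (c := Sum.inl ∘ c) hd n⟩

theorem exists_isDirCycle_avoiding_iff_exists_odd_subdivKeep :
    (∃ (n : ℕ) (c : ZMod n → V), 0 < n ∧ IsDirCycle (avoiding A T) c) ↔
      ∃ (n : ℕ) (c : ZMod n → V ⊕ V × V), Odd n ∧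
        IsDirCycle (avoiding (SubdivKeep A) (Sum.inl '' T)) c := by
  constructor
  · rintro ⟨n, c, hn, -, hc⟩
    obtain ⟨k, hk, hwalk⟩ := exists_odd_hasWalk_subdivKeep A T hn hc
    obtain ⟨m, c', -, hm, hc'⟩ := exists_isDirCycle_of_hasWalk hk.pos hwalk
    exact ⟨m, c', hm hk, hc'⟩
  · rintro ⟨n, c, hn, hc⟩
    obtain ⟨p, hp⟩ := exists_isDirCycle_iff_exists_transGen.mp ⟨n, c, hn.pos, hc⟩
    exact exists_isDirCycle_iff_exists_transGen.mpr (exists_transGen_of_transGen_subdivKeep A T hp)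

end Subdivision

/-- `S` is a directed feedback vertex set of `D` iff it is a directed odd cycle
transversal of `D'` (the arc-subdivided graph keeping original arcs); in
particular `D` has a directed cycle iff `D'` has a directed odd cycle. -/
theorem stmt_14 {V : Type*} (A : V → V → Prop) (S : Set V) :
    ((¬ ∃ (n : ℕ) (c : ZMod n → V), 0 < n ∧ Function.Injective c ∧
        ∀ i, A (c i) (c (i + 1)) ∧ c i ∉ S) ↔
      (¬ ∃ (n : ℕ) (c : ZMod n → V ⊕ V × V), Odd n ∧ Function.Injective c ∧
        ∀ i, SubdivKeep A (c i) (c (i + 1)) ∧ c i ∉ Sum.inl '' S)) ∧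
    ((∃ (n : ℕ) (c : ZMod n → V), 0 < n ∧ Function.Injective c ∧
        ∀ i, A (c i) (c (i + 1))) ↔
      (∃ (n : ℕ) (c : ZMod n → V ⊕ V × V), Odd n ∧ Function.Injective c ∧
        ∀ i, SubdivKeep A (c i) (c (i + 1)))) := by
  refine ⟨not_congr (exists_isDirCycle_avoiding_iff_exists_odd_subdivKeep A S), ?_⟩
  simpa only [avoiding_empty, Set.image_empty, IsDirCycle] using
    exists_isDirCycle_avoiding_iff_exists_odd_subdivKeep A ∅
end
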